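/- Let H be a hypergraph, e ∈ H a hyperedge, s ⊆ e nonempty, and let H₁ = H − (e \ s) and H₂ = H₁ \ N_{H₁}(s). Then s is a hyperedge of H₁, every hyperedge of H₂ is disjoint from s, and the map (t₂, w) ↦ s ∪ t₂ ∪ w is a bijection between pairs consisting of a hitting set t₂ of H₂ and a subset w of V₁ = V(H₁) \ (V(H₂) ∪ s), and the hitting sets t of H with t ∩ e = s. -/

import Mathlib

/-- The vertex set `V(H) = ⋃_{e ∈ H} e` of a hypergraph `H`. -/
def vertexSet {α : Type*} [DecidableEq α] (H : Finset (Finset α)) : Finset α := H.sup id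

/-- The set `hit_H` of all hitting sets of a hypergraph `H`:
subsets `t ⊆ V(H)` meeting every hyperedge of `H` (every subset of `V(∅) = ∅`
vacuously hits the empty hypergraph). -/
def hitSets {α : Type*} [DecidableEq α] (H : Finset (Finset α)) : Finset (Finset α) :=
  (vertexSet H).powerset.filter (fun t => ∀ e ∈ H, (t ∩ e).Nonempty)

/-!
A hitting set `t` of `H` with `t ∩ e = s` avoids `e \ s`, so it is the same as a hitting set
of `H₁ = H − (e \ s)` containing `s`. Containing `s`, it meets every edge of `N_{H₁}(s)`
for free; the only constraint left is that `t ∩ V(H₂)` hits `H₂`, and the vertices of `V₁`,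
which lie in no edge of `H₂`, can be chosen arbitrarily. Hence `t ↦ (t ∩ V(H₂), t ∩ V₁)`
inverts `(t₂, w) ↦ s ∪ t₂ ∪ w`.
-/

section

open Finset

variable {α : Type*} [DecidableEq α]

/-- `H − p`. -/
def deleteVertices (H : Finset (Finset α)) (p : Finset α) : Finset (Finset α) :=
  H.image (· \ p)

/-- `N_H(s)`. -/
def neighbourhood (H : Finset (Finset α)) (s : Finset α) : Finset (Finset α) :=
  H.filter fun f => (f ∩ s).Nonempty

def Hits (t : Finset α) (H : Finset (Finset α)) : Prop :=
  ∀ f ∈ H, (t ∩ f).Nonempty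

variable {H : Finset (Finset α)} {f p s t t' : Finset α}

theorem mem_vertexSet {x : α} : x ∈ vertexSet H ↔ ∃ f ∈ H, x ∈ f := by
  simp [vertexSet]

theorem subset_vertexSet (hf : f ∈ H) : f ⊆ vertexSet H :=
  le_sup (f := id) hf

theorem vertexSet_deleteVertices (H : Finset (Finset α)) (p : Finset α) :
    vertexSet (deleteVertices H p) = vertexSet H \ p := by
  ext x
  simp only [mem_vertexSet, deleteVertices, exists_mem_image, mem_sdiff]
  aesop

theorem disjoint_of_mem_sdiff_neighbourhood (hf : f ∈ H \ neighbourhood H s) :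
    Disjoint f s := by
  rw [neighbourhood, ← filter_not, mem_filter, not_nonempty_iff_eq_empty] at hf
  exact disjoint_iff_inter_eq_empty.2 hf.2

theorem disjoint_vertexSet_sdiff_neighbourhood :
    Disjoint (vertexSet (H \ neighbourhood H s)) s :=
  Finset.disjoint_sup_left.2 fun _ => disjoint_of_mem_sdiff_neighbourhood

theorem mem_hitSets : t ∈ hitSets H ↔ t ⊆ vertexSet H ∧ Hits t H := by
  rw [hitSets, mem_filter, mem_powerset, Hits]

theorem Hits.mono (h : Hits t H) (htt' : t ⊆ t') : Hits t' H :=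
  fun f hf => (h f hf).mono (inter_subset_inter_right htt')

theorem hits_deleteVertices_iff (h : Disjoint t p) :
    Hits t (deleteVertices H p) ↔ Hits t H := by
  simp only [Hits, deleteVertices, forall_mem_image, ← inter_sdiff_assoc,
    sdiff_eq_self_of_disjoint (h.mono_left inter_subset_left)]

theorem hits_sdiff_neighbourhood_iff (h : s ⊆ t) :
    Hits t (H \ neighbourhood H s) ↔ Hits t H := by
  refine ⟨fun ht f hf => ?_, fun ht f hf => ht f (mem_sdiff.1 hf).1⟩
  by_cases hfs : (f ∩ s).Nonempty
  · rw [inter_comm]; exact hfs.mono (inter_subset_inter_left h)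
  · exact ht f (mem_sdiff.2 ⟨hf, fun hN => hfs (mem_filter.1 hN).2⟩)

theorem hits_inter_vertexSet_iff : Hits (t ∩ vertexSet H) H ↔ Hits t H := by
  refine forall₂_congr fun f hf => ?_
  rw [inter_assoc, inter_eq_right.2 (subset_vertexSet hf)]

theorem inter_eq_iff_subset_and_disjoint_sdiff {e : Finset α} (hs : s ⊆ e) :
    t ∩ e = s ↔ s ⊆ t ∧ Disjoint t (e \ s) := by
  rw [disjoint_left]
  constructor
  · rintro rfl
    exact ⟨inter_subset_left, fun x hxt hx =>
      (mem_sdiff.1 hx).2 (mem_inter.2 ⟨hxt, (mem_sdiff.1 hx).1⟩)⟩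
  · rintro ⟨hst, hdisj⟩
    ext x
    simp only [mem_inter]
    exact ⟨fun ⟨hxt, hxe⟩ => by_contra fun hxs => hdisj hxt (mem_sdiff.2 ⟨hxe, hxs⟩),
      fun hxs => ⟨hst hxs, hs hxs⟩⟩

theorem union_inter_eq_of_subset_of_disjoint {u a A : Finset α} (ha : a ⊆ A)
    (hu : Disjoint u A) : (u ∪ a) ∩ A = a := by
  rw [union_inter_distrib_right, disjoint_iff_inter_eq_empty.1 hu, empty_union, inter_eq_left.2 ha]

theorem filter_hitSets_inter_eq {e : Finset α} (hs : s ⊆ e) :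
    (hitSets H).filter (fun t => t ∩ e = s) =
      (hitSets (deleteVertices H (e \ s))).filter (s ⊆ ·) := by
  ext t
  simp only [mem_filter, mem_hitSets, vertexSet_deleteVertices, subset_sdiff,
    inter_eq_iff_subset_and_disjoint_sdiff hs]
  constructor
  · rintro ⟨⟨htV, hhit⟩, hst, hdisj⟩
    exact ⟨⟨⟨htV, hdisj⟩, (hits_deleteVertices_iff hdisj).2 hhit⟩, hst⟩
  · rintro ⟨⟨⟨htV, hdisj⟩, hhit⟩, hst⟩
    exact ⟨⟨htV, (hits_deleteVertices_iff hdisj).1 hhit⟩, hst, hdisj⟩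

theorem bijOn_hitSets_sdiff_neighbourhood (hs : s ⊆ vertexSet H) :
    Set.BijOn (fun p : Finset α × Finset α => s ∪ p.1 ∪ p.2)
      ↑(hitSets (H \ neighbourhood H s) ×ˢ
        (vertexSet H \ (vertexSet (H \ neighbourhood H s) ∪ s)).powerset)
      ↑((hitSets H).filter (s ⊆ ·)) := by
  set A := vertexSet (H \ neighbourhood H s)
  set B := vertexSet H \ (A ∪ s)
  have hAH : A ⊆ vertexSet H := sup_mono sdiff_subset
  have hAs : Disjoint A s := disjoint_vertexSet_sdiff_neighbourhood
  have hAB : Disjoint A B := disjoint_sdiff.mono_left subset_union_left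
  have hsB : Disjoint s B := disjoint_sdiff.mono_left subset_union_right
  refine Set.InvOn.bijOn (f' := fun t => (t ∩ A, t ∩ B)) ⟨?_, ?_⟩ ?_ ?_
  · rintro ⟨a, b⟩ hab
    simp only [coe_product, Set.mem_prod, mem_coe, mem_hitSets, mem_powerset] at hab
    obtain ⟨⟨haA, -⟩, hbB⟩ := hab
    refine Prod.ext ?_ (union_inter_eq_of_subset_of_disjoint hbB
      (disjoint_union_left.2 ⟨hsB, hAB.mono_left haA⟩))
    change (s ∪ a ∪ b) ∩ A = a
    rw [union_right_comm]
    exact union_inter_eq_of_subset_of_disjoint haA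
      (disjoint_union_left.2 ⟨hAs.symm, hAB.symm.mono_left hbB⟩)
  · intro t ht
    simp only [mem_coe, mem_filter, mem_hitSets] at ht
    obtain ⟨⟨htV, -⟩, hst⟩ := ht
    ext x
    have := @hst x
    have := @htV x
    simp only [mem_union, mem_inter, B, mem_sdiff]
    tauto
  · rintro ⟨a, b⟩ hab
    simp only [coe_product, Set.mem_prod, mem_coe, mem_hitSets, mem_powerset] at hab
    obtain ⟨⟨haA, hahit⟩, hbB⟩ := hab
    have hst : s ⊆ s ∪ a ∪ b := subset_union_left.trans subset_union_left
    simp only [mem_coe, mem_filter, mem_hitSets]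
    refine ⟨⟨union_subset (union_subset hs (haA.trans hAH)) (hbB.trans sdiff_subset), ?_⟩,
      hst⟩
    exact (hits_sdiff_neighbourhood_iff hst).1
      (hahit.mono (subset_union_right.trans subset_union_left))
  · intro t ht
    simp only [mem_coe, mem_filter, mem_hitSets] at ht
    obtain ⟨⟨-, hhit⟩, hst⟩ := ht
    simp only [coe_product, Set.mem_prod, mem_coe, mem_hitSets, mem_powerset]
    exact ⟨⟨inter_subset_right,
      hits_inter_vertexSet_iff.2 ((hits_sdiff_neighbourhood_iff hst).2 hhit)⟩,
      inter_subset_right⟩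

end

theorem stmt_14_general {α : Type*} [DecidableEq α] (H : Finset (Finset α))
    (e : Finset α) (he : e ∈ H)
    (s : Finset α) (hs : s ⊆ e)
    (H₁ H₂ : Finset (Finset α)) (V₁ : Finset α)
    (hH₁ : H₁ = H.image (fun f => f \ (e \ s)))
    (hH₂ : H₂ = H₁ \ (H₁.filter (fun f => (f ∩ s).Nonempty)))
    (hV₁ : V₁ = vertexSet H₁ \ (vertexSet H₂ ∪ s)) :
    s ∈ H₁ ∧ (∀ f ∈ H₂, Disjoint f s) ∧
      Set.BijOn (fun p : Finset α × Finset α => s ∪ p.1 ∪ p.2)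
        ↑((hitSets H₂) ×ˢ V₁.powerset)
        ↑((hitSets H).filter (fun t => t ∩ e = s)) := by
  have hsH₁ : s ∈ H₁ :=
    hH₁ ▸ Finset.mem_image.2 ⟨e, he, Finset.sdiff_sdiff_eq_self hs⟩
  refine ⟨hsH₁, fun f hf => disjoint_of_mem_sdiff_neighbourhood (hH₂ ▸ hf), ?_⟩
  rw [filter_hitSets_inter_eq hs]
  subst hH₁ hH₂ hV₁
  exact bijOn_hitSets_sdiff_neighbourhood (subset_vertexSet hsH₁)

/-- Let `H` be a hypergraph, `e ∈ H`, `∅ ≠ s ⊆ e`, `H₁ = H − (e \ s)` and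
`H₂ = H₁ \ N_{H₁}(s)`.  Then `s` is a hyperedge of `H₁`, every hyperedge of `H₂` is
disjoint from `s`, and `(t₂, w) ↦ s ∪ t₂ ∪ w` is a bijection between pairs of a hitting
set `t₂` of `H₂` and a subset `w ⊆ V₁ = V(H₁) \ (V(H₂) ∪ s)`, and the hitting sets `t`
of `H` with `t ∩ e = s`. -/
theorem stmt_14 {α : Type*} [DecidableEq α] (H : Finset (Finset α))
    (e : Finset α) (he : e ∈ H)
    (s : Finset α) (hs : s ⊆ e) (hsne : s.Nonempty)
    (H₁ H₂ : Finset (Finset α)) (V₁ : Finset α)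
    (hH₁ : H₁ = H.image (fun f => f \ (e \ s)))
    (hH₂ : H₂ = H₁ \ (H₁.filter (fun f => (f ∩ s).Nonempty)))
    (hV₁ : V₁ = vertexSet H₁ \ (vertexSet H₂ ∪ s)) :
    s ∈ H₁ ∧ (∀ f ∈ H₂, Disjoint f s) ∧
      Set.BijOn (fun p : Finset α × Finset α => s ∪ p.1 ∪ p.2)
        ↑((hitSets H₂) ×ˢ V₁.powerset)
        ↑((hitSets H).filter (fun t => t ∩ e = s)) :=
  stmt_14_general H e he s hs H₁ H₂ V₁ hH₁ hH₂ hV₁
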